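/- For any marked simplicial set A and any Reedy-fibrant marked bisimplicial set X, the simplicial set A \ X is a Kan complex, and the inclusion A \ X ↪ Å \ X̊ (into the unmarked division of the underlying objects) is a full inclusion. -/

import Mathlib

set_option linter.unusedVariables false

open CategoryTheory CategoryTheory.Limits Simplicial Opposite

namespace Paper

abbrev BSSet : Type 1 := SimplexCategoryᵒᵖ × SimplexCategoryᵒᵖ ⥤ Type

@[simps]
def boxObj (A B : SSet.{0}) : BSSet where
  obj p := A.obj p.1 × B.obj p.2
  map f := TypeCat.ofHom fun x => (A.map f.1 x.1, B.map f.2 x.2)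
  map_id p := by apply ConcreteCategory.hom_ext; intro x; simp
  map_comp f g := by apply ConcreteCategory.hom_ext; intro x; simp

@[simps]
def boxMap {A A' B B' : SSet.{0}} (u : A ⟶ A') (v : B ⟶ B') :
    boxObj A B ⟶ boxObj A' B' where
  app p := TypeCat.ofHom fun x => (u.app p.1 x.1, v.app p.2 x.2)
  naturality p q φ := by
    apply ConcreteCategory.hom_ext; intro x
    exact Prod.ext (NatTrans.naturality_apply u _ _) (NatTrans.naturality_apply v _ _)

lemma boxMap_id (A B : SSet.{0}) : boxMap (𝟙 A) (𝟙 B) = 𝟙 (boxObj A B) := rfl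

lemma boxMap_comp {A A' A'' B B' B'' : SSet.{0}} (u : A ⟶ A') (u' : A' ⟶ A'')
    (v : B ⟶ B') (v' : B' ⟶ B'') :
    boxMap (u ≫ u') (v ≫ v') = boxMap u v ≫ boxMap u' v' := rfl

def under (A : SSet.{0}) (X : BSSet) : SSet.{0} where
  obj n := boxObj A (SSet.stdSimplex.obj n.unop) ⟶ X
  map φ := TypeCat.ofHom fun σ => boxMap (𝟙 A) (SSet.stdSimplex.map φ.unop) ≫ σ
  map_id n := by
    apply ConcreteCategory.hom_ext; intro σ
    show boxMap (𝟙 A) (SSet.stdSimplex.map (𝟙 n.unop)) ≫ σ = σ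
    erw [CategoryTheory.Functor.map_id, boxMap_id, Category.id_comp]
  map_comp {n m k} φ ψ := by
    apply ConcreteCategory.hom_ext; intro σ
    show boxMap (𝟙 A) (SSet.stdSimplex.map (ψ.unop ≫ φ.unop)) ≫ σ = _
    erw [Functor.map_comp, show (𝟙 A : A ⟶ A) = 𝟙 A ≫ 𝟙 A from (Category.id_comp _).symm,
      boxMap_comp, Category.assoc]
    rfl

def overB (X : BSSet) (B : SSet.{0}) : SSet.{0} where
  obj n := boxObj (SSet.stdSimplex.obj n.unop) B ⟶ X
  map φ := TypeCat.ofHom fun σ => boxMap (SSet.stdSimplex.map φ.unop) (𝟙 B) ≫ σ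
  map_id n := by
    apply ConcreteCategory.hom_ext; intro σ
    show boxMap (SSet.stdSimplex.map (𝟙 n.unop)) (𝟙 B) ≫ σ = σ
    erw [CategoryTheory.Functor.map_id, boxMap_id, Category.id_comp]
  map_comp {n m k} φ ψ := by
    apply ConcreteCategory.hom_ext; intro σ
    show boxMap (SSet.stdSimplex.map (ψ.unop ≫ φ.unop)) (𝟙 B) ≫ σ = _
    erw [Functor.map_comp, show (𝟙 B : B ⟶ B) = 𝟙 B ≫ 𝟙 B from (Category.id_comp _).symm,
      boxMap_comp, Category.assoc]
    rfl

@[simps]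
def underWhisker {A A' : SSet.{0}} (u : A ⟶ A') (X : BSSet) :
    under A' X ⟶ under A X where
  app n := TypeCat.ofHom fun σ => boxMap u (𝟙 _) ≫ σ
  naturality n m φ := rfl

@[simps]
def underPush (A : SSet.{0}) {X Y : BSSet} (f : X ⟶ Y) :
    under A X ⟶ under A Y where
  app n := TypeCat.ofHom fun σ => σ ≫ f
  naturality n m φ := rfl

@[simps]
def overPush (B : SSet.{0}) {X Y : BSSet} (f : X ⟶ Y) :
    overB X B ⟶ overB Y B where
  app n := TypeCat.ofHom fun σ => σ ≫ f
  naturality n m φ := rfl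

---- new chunk

/-- The functor `A □ - : SSet ⥤ BSSet`. -/
@[simps]
def boxLFunctor (A : SSet.{0}) : SSet.{0} ⥤ BSSet where
  obj B := boxObj A B
  map v := boxMap (𝟙 A) v
  map_id B := rfl
  map_comp v w := rfl

/-- The functor `- □ B : SSet ⥤ BSSet`. -/
@[simps]
def boxRFunctor (B : SSet.{0}) : SSet.{0} ⥤ BSSet where
  obj A := boxObj A B
  map u := boxMap u (𝟙 B)
  map_id A := rfl
  map_comp u w := rfl

/-- The functor `A \ - : BSSet ⥤ SSet`. -/
@[simps]
def underFunctor (A : SSet.{0}) : BSSet ⥤ SSet.{0} where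
  obj X := under A X
  map f := underPush A f
  map_id X := rfl
  map_comp f g := rfl

/-- The functor `- / B : BSSet ⥤ SSet`. -/
@[simps]
def overFunctor (B : SSet.{0}) : BSSet ⥤ SSet.{0} where
  obj X := overB X B
  map f := overPush B f
  map_id X := rfl
  map_comp f g := rfl

/-- A map of simplicial sets is a Kan fibration if it has the right lifting property
with respect to all horn inclusions `Λ[n, i] ⟶ Δ[n]`, `n ≥ 1`, `0 ≤ i ≤ n`. -/
def IsKanFibration {S T : SSet.{0}} (f : S ⟶ T) : Prop :=
  ∀ (n : ℕ) (i : Fin (n + 2)), HasLiftingProperty (Λ[n + 1, i].ι) f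

/-- A map of simplicial sets is a trivial Kan fibration if it has the right lifting property
with respect to all boundary inclusions `∂Δ[n] ⟶ Δ[n]`. -/
def IsTrivialKanFibration {S T : SSet.{0}} (f : S ⟶ T) : Prop :=
  ∀ (n : ℕ), HasLiftingProperty (∂Δ[n].ι) f

/-- A map of simplicial sets is an inner fibration if it has the right lifting property
with respect to all inner horn inclusions `Λ[n, i] ⟶ Δ[n]`, `0 < i < n`. -/
def IsInnerFibration {S T : SSet.{0}} (f : S ⟶ T) : Prop :=
  ∀ (n : ℕ) (i : Fin (n + 1)), 0 < (i : ℕ) → (i : ℕ) < n →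
    HasLiftingProperty (Λ[n, i].ι) f

lemma underSq {A A' : SSet.{0}} (u : A ⟶ A') {X Y : BSSet} (f : X ⟶ Y) :
    underWhisker u X ≫ underPush A f = underPush A' f ≫ underWhisker u Y := rfl

/-- The gap map `⟨u \ f⟩ : A' \ X ⟶ A \ X ×_{A \ Y} A' \ Y`. -/
noncomputable def underGap {A A' : SSet.{0}} (u : A ⟶ A') {X Y : BSSet} (f : X ⟶ Y) :
    under A' X ⟶ pullback (underPush A f) (underWhisker u Y) :=
  pullback.lift (underWhisker u X) (underPush A' f) (underSq u f)

/-- A map of bisimplicial sets is a Reedy fibration if for every monomorphism `u : A ⟶ A'`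
of simplicial sets, the gap map `⟨u \ f⟩` is a Kan fibration. -/
def IsReedyFibration {X Y : BSSet} (f : X ⟶ Y) : Prop :=
  ∀ ⦃A A' : SSet.{0}⦄ (u : A ⟶ A'), Mono u → IsKanFibration (underGap u f)

/-- A bisimplicial set is Reedy fibrant if for every monomorphism `u : A ⟶ A'` of
simplicial sets, the restriction map `⟨u \ X⟩ : A' \ X ⟶ A \ X` is a Kan fibration. -/
def IsReedyFibrant (X : BSSet) : Prop :=
  ∀ ⦃A A' : SSet.{0}⦄ (u : A ⟶ A'), Mono u → IsKanFibration (underWhisker u X)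

/-- The cylinder `A × Δ¹` on a simplicial set. -/
def cyl (A : SSet.{0}) : SSet.{0} where
  obj n := A.obj n × Δ[1].obj n
  map f := TypeCat.ofHom fun x => (A.map f x.1, Δ[1].map f x.2)
  map_id n := by apply ConcreteCategory.hom_ext; intro x; simp
  map_comp f g := by apply ConcreteCategory.hom_ext; intro x; simp

/-- The inclusion `A ⟶ A × Δ¹` at the vertex `k` of `Δ¹`. -/
def cylIncl (k : Fin 2) (A : SSet.{0}) : A ⟶ cyl A where
  app n := TypeCat.ofHom fun a => (a, SSet.stdSimplex.const 1 k n)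
  naturality n m f := rfl

/-- Functoriality of the cylinder. -/
def cylMap {A B : SSet.{0}} (f : A ⟶ B) : cyl A ⟶ cyl B where
  app n := TypeCat.ofHom fun x => (f.app n x.1, x.2)
  naturality n m φ := by
    apply ConcreteCategory.hom_ext; intro x
    exact Prod.ext (NatTrans.naturality_apply f _ _) rfl

lemma cylIncl_cylMap (k : Fin 2) {A B : SSet.{0}} (f : A ⟶ B) :
    cylIncl k A ≫ cylMap f = f ≫ cylIncl k B := rfl

/-- Two maps of simplicial sets are related by an elementary homotopy if there is a
cylinder homotopy from one to the other. -/
def HomotopicOne {A B : SSet.{0}} (f g : A ⟶ B) : Prop :=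
  ∃ H : cyl A ⟶ B, cylIncl 0 A ≫ H = f ∧ cylIncl 1 A ≫ H = g

/-- A Kan complex: every horn has a filler. -/
def IsKanComplex (S : SSet.{0}) : Prop :=
  ∀ (n : ℕ) (i : Fin (n + 2)) (g : (Λ[n + 1, i] : SSet.{0}) ⟶ S),
    ∃ h : Δ[n + 1] ⟶ S, Λ[n + 1, i].ι ≫ h = g

/-- Precomposition on homotopy classes of maps. -/
def precompClass {A B : SSet.{0}} (f : A ⟶ B) (Z : SSet.{0}) :
    Quot (@HomotopicOne B Z) → Quot (@HomotopicOne A Z) :=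
  Quot.lift (fun g => Quot.mk _ (f ≫ g)) (by
    rintro g g' ⟨H, h0, h1⟩
    apply Quot.sound
    refine ⟨cylMap f ≫ H, ?_, ?_⟩
    · rw [← Category.assoc, cylIncl_cylMap, Category.assoc, h0]
    · rw [← Category.assoc, cylIncl_cylMap, Category.assoc, h1])

/-- A map of simplicial sets is a weak homotopy equivalence iff for every Kan complex `Z`
the induced map on homotopy classes of maps into `Z` is a bijection. -/
def WeakEquiv {A B : SSet.{0}} (f : A ⟶ B) : Prop :=
  ∀ Z : SSet.{0}, IsKanComplex Z → Function.Bijective (precompClass f Z)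

/-- A commutative square of simplicial sets (with `g` thought of as the right-hand vertical
map) is a homotopy pullback if for some factorization of `g` as a weak equivalence followed
by a Kan fibration, the induced gap map to the strict pullback is a weak equivalence. -/
noncomputable def IsHomotopyPullback {W U V Z : SSet.{0}}
    (a : W ⟶ U) (b : W ⟶ V) (g : U ⟶ Z) (h : V ⟶ Z) (comm : a ≫ g = b ≫ h) : Prop :=
  ∃ (U' : SSet.{0}) (w : U ⟶ U') (p : U' ⟶ Z) (hwp : w ≫ p = g),
    WeakEquiv w ∧ IsKanFibration p ∧
      WeakEquiv (pullback.lift (a ≫ w) b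
        (by rw [Category.assoc, hwp, comm]) : W ⟶ pullback p h)

/-- The spine of `Δ[n]`: the union of the edges `Δ{i, i+1}`. -/
def spine (n : ℕ) : SSet.{0} where
  obj m := { a : Δ[n].obj m //
    ∃ i : ℕ, ∀ j, ((SSet.stdSimplex.asOrderHom a) j : ℕ) = i ∨ ((SSet.stdSimplex.asOrderHom a) j : ℕ) = i + 1 }
  map f := TypeCat.ofHom fun a => ⟨Δ[n].map f a.1, by
    obtain ⟨i, hi⟩ := a.2
    exact ⟨i, fun j => hi _⟩⟩
  map_id m := by
    apply ConcreteCategory.hom_ext; intro a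
    apply Subtype.ext
    show Δ[n].map (𝟙 m) a.1 = a.1
    simp
  map_comp f g := by
    apply ConcreteCategory.hom_ext; intro a
    apply Subtype.ext
    show Δ[n].map (f ≫ g) a.1 = Δ[n].map g (Δ[n].map f a.1)
    simp

def spineIncl (n : ℕ) : spine n ⟶ Δ[n] where
  app m := TypeCat.ofHom fun a => a.1
  naturality n m f := rfl


/-- A Segal space: a Reedy fibrant bisimplicial set whose Segal maps
`X_n ⟶ X_1 ×_{X_0} ⋯ ×_{X_0} X_1` (i.e. the restrictions `Δⁿ \\ X ⟶ Iₙ \\ X` along the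
spine inclusions) are weak homotopy equivalences for `n ≥ 2`. -/
def IsSegalSpace (X : BSSet) : Prop :=
  IsReedyFibrant X ∧ ∀ n : ℕ, 2 ≤ n → WeakEquiv (underWhisker (spineIncl n) X)

/-- The unique map to `[0]` in the simplex category. -/
def toZero (m : SimplexCategory) : m ⟶ ⦋0⦌ :=
  SimplexCategory.Hom.mk ⟨fun _ => 0, fun _ _ _ => le_rfl⟩

lemma toZero_unique {m : SimplexCategory} (f g : m ⟶ ⦋0⦌) : f = g := by
  apply SimplexCategory.Hom.ext
  apply OrderHom.ext
  funext j
  apply Fin.ext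
  have h1 : ((f.toOrderHom j : Fin (⦋0⦌.len + 1)) : ℕ) < 0 + 1 := (f.toOrderHom j).isLt
  have h2 : ((g.toOrderHom j : Fin (⦋0⦌.len + 1)) : ℕ) < 0 + 1 := (g.toOrderHom j).isLt
  omega

lemma toZero_comp {m m' : SimplexCategory} (φ : m' ⟶ m) :
    φ ≫ toZero m = toZero m' :=
  toZero_unique _ _

lemma boxMapR_comp (A : SSet.{0}) {B B' B'' : SSet.{0}} (v : B ⟶ B') (w : B' ⟶ B'') :
    boxMap (𝟙 A) (v ≫ w) = boxMap (𝟙 A) v ≫ boxMap (𝟙 A) w := rfl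

/-- The map `Δ[1] □ Δ[0] ⟶ X` corresponding to an element `e ∈ X_{1,0}` by the Yoneda lemma. -/
def yonedaBox {X : BSSet} (e : X.obj (op ⦋1⦌, op ⦋0⦌)) :
    boxObj Δ[1] Δ[0] ⟶ X where
  app p := TypeCat.ofHom fun x =>
    X.map ((SSet.stdSimplex.objEquiv x.1).op,
      (SSet.stdSimplex.objEquiv x.2).op) e
  naturality p q φ := by
    apply ConcreteCategory.hom_ext; intro x
    refine Eq.trans ?_ (FunctorToTypes.map_comp_apply X _ φ e)
    rfl

def fApp {X Y : BSSet} (f : X ⟶ Y) (e : X.obj (op ⦋1⦌, op ⦋0⦌)) : Y.obj (op ⦋1⦌, op ⦋0⦌) :=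
  f.app (op ⦋1⦌, op ⦋0⦌) e

lemma yonedaBox_comp {X Y : BSSet} (f : X ⟶ Y) (e : X.obj (op ⦋1⦌, op ⦋0⦌)) :
    yonedaBox e ≫ f = yonedaBox (fApp f e) := by
  apply NatTrans.ext
  funext p
  apply ConcreteCategory.hom_ext; intro x
  exact NatTrans.naturality_apply f _ e

/-- The constant `Δ[1] □ Δ[m]`-diagram in `X` with value the edge `e`. -/
def eConst {X : BSSet} (m : SimplexCategory) (e : X.obj (op ⦋1⦌, op ⦋0⦌)) :
    boxObj Δ[1] (SSet.stdSimplex.obj m) ⟶ X :=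
  boxMap (𝟙 Δ[1]) (SSet.stdSimplex.map (toZero m)) ≫ yonedaBox e

lemma eConst_whisker {X : BSSet} {m m' : SimplexCategory} (φ : m' ⟶ m)
    (e : X.obj (op ⦋1⦌, op ⦋0⦌)) :
    boxMap (𝟙 Δ[1]) (SSet.stdSimplex.map φ) ≫ eConst m e = eConst m' e := by
  erw [eConst, eConst, ← Category.assoc, ← boxMapR_comp, ← Functor.map_comp, toZero_comp]

lemma eConst_comp {X Y : BSSet} (f : X ⟶ Y) {m : SimplexCategory}
    (e : X.obj (op ⦋1⦌, op ⦋0⦌)) :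
    eConst m e ≫ f = eConst m (fApp f e) := by
  rw [eConst, eConst, Category.assoc, yonedaBox_comp]

/-- `(B \ X)^e`: the simplicial set of `B`-shaped diagrams in `X` whose restriction along the
edge `ι : Δ[1] ⟶ B` is constant at the edge `e ∈ X_{1,0}`. -/
def fib {B : SSet.{0}} (ι : Δ[1] ⟶ B) (X : BSSet) (e : X.obj (op ⦋1⦌, op ⦋0⦌)) :
    SSet.{0} where
  obj n := { σ : boxObj B (SSet.stdSimplex.obj n.unop) ⟶ X //
      boxMap ι (𝟙 _) ≫ σ = eConst n.unop e }
  map {n m} φ := TypeCat.ofHom fun σ => ⟨boxMap (𝟙 B) (SSet.stdSimplex.map φ.unop) ≫ σ.1, by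
    rw [← Category.assoc,
      show boxMap ι (𝟙 _) ≫ boxMap (𝟙 B) (SSet.stdSimplex.map φ.unop)
        = boxMap (𝟙 Δ[1]) (SSet.stdSimplex.map φ.unop) ≫ boxMap ι (𝟙 _) from rfl,
      Category.assoc, σ.2, eConst_whisker]⟩
  map_id n := by
    apply ConcreteCategory.hom_ext; intro σ
    apply Subtype.ext
    show boxMap (𝟙 B) (SSet.stdSimplex.map (𝟙 n.unop)) ≫ σ.1 = σ.1
    erw [CategoryTheory.Functor.map_id, boxMap_id, Category.id_comp]
  map_comp {n m k} φ ψ := by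
    apply ConcreteCategory.hom_ext; intro σ
    apply Subtype.ext
    show boxMap (𝟙 B) (SSet.stdSimplex.map (ψ.unop ≫ φ.unop)) ≫ σ.1 = _
    erw [Functor.map_comp, boxMapR_comp, Category.assoc]
    rfl

/-- The forgetful map `(B \ X)^e ⟶ B \ X`. -/
def fibFst {B : SSet.{0}} (ι : Δ[1] ⟶ B) (X : BSSet) (e : X.obj (op ⦋1⦌, op ⦋0⦌)) :
    fib ι X e ⟶ under B X where
  app n := TypeCat.ofHom fun σ => σ.1
  naturality n m φ := rfl

/-- Restriction `(B' \ X)^e ⟶ (B \ X)^e` along `u : B ⟶ B'`. -/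
def fibRes {B B' : SSet.{0}} (u : B ⟶ B') (ι : Δ[1] ⟶ B) (X : BSSet)
    (e : X.obj (op ⦋1⦌, op ⦋0⦌)) :
    fib (ι ≫ u) X e ⟶ fib ι X e where
  app n := TypeCat.ofHom fun σ => ⟨boxMap u (𝟙 _) ≫ σ.1, by
    rw [← Category.assoc,
      show boxMap ι (𝟙 _) ≫ boxMap u (𝟙 _) = boxMap (ι ≫ u) (𝟙 _) from rfl, σ.2]⟩
  naturality n m φ := rfl

/-- Pushforward `(B \ X)^e ⟶ (B \ Y)^{f(e)}` along `f : X ⟶ Y`. -/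
def fibPush {B : SSet.{0}} (ι : Δ[1] ⟶ B) {X Y : BSSet} (f : X ⟶ Y)
    (e : X.obj (op ⦋1⦌, op ⦋0⦌)) :
    fib ι X e ⟶ fib ι Y (fApp f e) where
  app n := TypeCat.ofHom fun σ => ⟨σ.1 ≫ f, by rw [← Category.assoc, σ.2, eConst_comp]⟩
  naturality n m φ := rfl

lemma fibSq {B B' : SSet.{0}} (u : B ⟶ B') (ι : Δ[1] ⟶ B) {X Y : BSSet} (f : X ⟶ Y)
    (e : X.obj (op ⦋1⦌, op ⦋0⦌)) :
    fibRes u ι X e ≫ fibPush ι f e = fibPush (ι ≫ u) f e ≫ fibRes u ι Y (fApp f e) := rfl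

/-- The given square of fibered diagram spaces (restriction on top of pushforward)
is a homotopy pullback. -/
noncomputable def IsCocartAlong {B B' : SSet.{0}} (u : B ⟶ B') (ι : Δ[1] ⟶ B)
    {X Y : BSSet} (f : X ⟶ Y) (e : X.obj (op ⦋1⦌, op ⦋0⦌)) : Prop :=
  IsHomotopyPullback (fibRes u ι X e) (fibPush (ι ≫ u) f e)
    (fibPush ι f e) (fibRes u ι Y (fApp f e)) (fibSq u ι f e)

/-- The gap map `(B' \ X)^e ⟶ (B \ X)^e ×_{(B \ Y)^{f(e)}} (B' \ Y)^{f(e)}`. -/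
noncomputable def fibGap {B B' : SSet.{0}} (u : B ⟶ B') (ι : Δ[1] ⟶ B) {X Y : BSSet}
    (f : X ⟶ Y) (e : X.obj (op ⦋1⦌, op ⦋0⦌)) :
    fib (ι ≫ u) X e ⟶ pullback (fibPush ι f e) (fibRes u ι Y (fApp f e)) :=
  pullback.lift (fibRes u ι X e) (fibPush (ι ≫ u) f e) (fibSq u ι f e)

/-- The morphism `[1] ⟶ [n]` in the simplex category given by `0 ↦ 0`, `1 ↦ 1`. -/
def edge01Hom (n : ℕ) (h : 1 ≤ n) : (⦋1⦌ : SimplexCategory) ⟶ ⦋n⦌ :=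
  SimplexCategory.Hom.mk ⟨Fin.castLE (by simp only [SimplexCategory.len_mk]; omega),
    (Fin.strictMono_castLE _).monotone⟩

/-- The edge `Δ^{0,1} ⟶ Δⁿ`. -/
def edge01 (n : ℕ) (h : 1 ≤ n) : Δ[1] ⟶ Δ[n] :=
  SSet.stdSimplex.map (edge01Hom n h)

/-- The edge `Δ^{0,1} ⟶ Λ[n, 0]` of the left horn. -/
def edgeHorn (n : ℕ) (h : 2 ≤ n) : Δ[1] ⟶ (Λ[n, 0] : SSet.{0}) where
  app m := TypeCat.ofHom fun a => ⟨(edge01 n (by omega)).app m a, by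
    intro hEq
    have h2 : (⟨2, by omega⟩ : Fin (n + 1)) ∈
        Set.range (SSet.stdSimplex.asOrderHom ((edge01 n (by omega)).app m a)) ∪ {0} := by
      rw [hEq]; exact Set.mem_univ _
    rcases h2 with ⟨j, hj⟩ | h0
    · have hsmall : ((SSet.stdSimplex.asOrderHom ((edge01 n (by omega)).app m a)) j : ℕ) < 2 :=
        ((SSet.stdSimplex.asOrderHom a) j).isLt
      have hv : ((SSet.stdSimplex.asOrderHom ((edge01 n (by omega)).app m a)) j : ℕ) = 2 :=
        congrArg Fin.val hj
      omega
    · rw [Set.mem_singleton_iff] at h0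
      have := congrArg Fin.val h0
      simp at this⟩
  naturality m m' φ := by
    apply ConcreteCategory.hom_ext; intro a
    apply Subtype.ext
    exact NatTrans.naturality_apply (edge01 n (by omega)) φ a

lemma edgeHorn_incl (n : ℕ) (h : 2 ≤ n) :
    edgeHorn n h ≫ Λ[n, 0].ι = edge01 n (by omega) := rfl

/-- A morphism `e ∈ X_{1,0}` is `f`-cocartesian if the square
`(Δ² \ X)^e → (Λ²₀ \ X)^e` over `(Δ² \ Y)^{f(e)} → (Λ²₀ \ Y)^{f(e)}` is a homotopy
pullback. -/
noncomputable def IsCocartesianEdge {X Y : BSSet} (f : X ⟶ Y)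
    (e : X.obj (op ⦋1⦌, op ⦋0⦌)) : Prop :=
  IsCocartAlong (Λ[2, 0].ι) (edgeHorn 2 (by omega)) f e

/-- Abbreviation for `op [k]`. -/
abbrev sc (k : ℕ) : SimplexCategoryᵒᵖ := op (SimplexCategory.mk k)

lemma fibFst_push {B : SSet.{0}} (ι : Δ[1] ⟶ B) {X Y : BSSet} (f : X ⟶ Y)
    (e : X.obj (op ⦋1⦌, op ⦋0⦌)) :
    fibFst ι X e ≫ underPush B f = fibPush ι f e ≫ fibFst ι Y (fApp f e) := rfl

lemma fibFst_whisker {B B' : SSet.{0}} (u : B ⟶ B') (ι : Δ[1] ⟶ B) (X : BSSet)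
    (e : X.obj (op ⦋1⦌, op ⦋0⦌)) :
    fibFst (ι ≫ u) X e ≫ underWhisker u X = fibRes u ι X e ≫ fibFst ι X e := rfl

/-- The forgetful map
`(B' \ Y)^{f(e)} ×_{(B \ Y)^{f(e)}} (B \ X)^e ⟶ B' \ Y ×_{B \ Y} B \ X`
(with the pullbacks written in the other order). -/
noncomputable def fibForget {B B' : SSet.{0}} (u : B ⟶ B') (ι : Δ[1] ⟶ B) {X Y : BSSet}
    (f : X ⟶ Y) (e : X.obj (op ⦋1⦌, op ⦋0⦌)) :
    pullback (fibPush ι f e) (fibRes u ι Y (fApp f e)) ⟶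
      pullback (underPush B f) (underWhisker u Y) :=
  pullback.lift
    (pullback.fst _ _ ≫ fibFst ι X e)
    (pullback.snd _ _ ≫ fibFst (ι ≫ u) Y (fApp f e))
    (by
      rw [Category.assoc, Category.assoc, fibFst_push, fibFst_whisker,
        ← Category.assoc, ← Category.assoc, pullback.condition])

/-- The left spine `Lₙ ⊆ Δⁿ`: the union of the edge `Δ^{0,1}` with the spine
`Δ^{0,2} ∪ Δ^{2,3} ∪ ⋯ ∪ Δ^{n-1,n}` of the face `d₁Δⁿ`. -/
def leftSpine (n : ℕ) : SSet.{0} where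
  obj m := { a : Δ[n].obj m //
    (∀ j, ((SSet.stdSimplex.asOrderHom a) j : ℕ) ≤ 1) ∨
    (∀ j, ((SSet.stdSimplex.asOrderHom a) j : ℕ) = 0 ∨ ((SSet.stdSimplex.asOrderHom a) j : ℕ) = 2) ∨
    (∃ i : ℕ, 2 ≤ i ∧
      ∀ j, ((SSet.stdSimplex.asOrderHom a) j : ℕ) = i ∨ ((SSet.stdSimplex.asOrderHom a) j : ℕ) = i + 1) }
  map {m m'} φ := TypeCat.ofHom fun a => ⟨Δ[n].map φ a.1, by
    rcases a.2 with h | h | ⟨i, h2, h⟩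
    exacts [Or.inl fun j => h _, Or.inr (Or.inl fun j => h _),
      Or.inr (Or.inr ⟨i, h2, fun j => h _⟩)]⟩
  map_id m := by
    apply ConcreteCategory.hom_ext; intro a
    apply Subtype.ext
    show Δ[n].map (𝟙 m) a.1 = a.1
    simp
  map_comp φ ψ := by
    apply ConcreteCategory.hom_ext; intro a
    apply Subtype.ext
    show Δ[n].map (φ ≫ ψ) a.1 = Δ[n].map ψ (Δ[n].map φ a.1)
    simp

def leftSpineIncl (n : ℕ) : leftSpine n ⟶ Δ[n] where
  app m := TypeCat.ofHom fun a => a.1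
  naturality m m' φ := rfl

/-- The edge `Δ^{0,1} ⟶ Lₙ`. -/
def edgeLeftSpine (n : ℕ) (h : 1 ≤ n) : Δ[1] ⟶ leftSpine n where
  app m := TypeCat.ofHom fun a => ⟨(edge01 n h).app m a,
    Or.inl fun j => Nat.lt_succ_iff.mp ((SSet.stdSimplex.asOrderHom a) j).isLt⟩
  naturality m m' φ := by
    apply ConcreteCategory.hom_ext; intro a
    apply Subtype.ext
    exact NatTrans.naturality_apply (edge01 n h) φ a

lemma edgeLeftSpine_incl (n : ℕ) (h : 1 ≤ n) :
    edgeLeftSpine n h ≫ leftSpineIncl n = edge01 n h := rfl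

/-- The `m`-th column `X_m` of a bisimplicial set, as a simplicial set. -/
def col (X : BSSet) (m : SimplexCategory) : SSet.{0} where
  obj n := X.obj (op m, n)
  map {n n'} g := TypeCat.ofHom fun x => X.map (𝟙 (op m), g) x
  map_id n := by
    apply ConcreteCategory.hom_ext; intro x
    exact types_congr_hom (X.map_id (op m, n)) x
  map_comp {n n' n''} g h := by
    apply ConcreteCategory.hom_ext; intro x
    exact FunctorToTypes.map_comp_apply X
      ((𝟙 (op m), g) : (op m, n) ⟶ (op m, n'))
      ((𝟙 (op m), h) : (op m, n') ⟶ (op m, n'')) x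

/-- Horizontal face of an edge `e ∈ X_{1,0}`: `hface 1 e` is the source vertex and
`hface 0 e` the target vertex. -/
def hface {X : BSSet} (i : Fin 2) (e : X.obj (op ⦋1⦌, op ⦋0⦌)) : X.obj (op ⦋0⦌, op ⦋0⦌) :=
  X.map ((((SimplexCategory.δ i).op : sc 1 ⟶ sc 0), 𝟙 (sc 0)) :
    (sc 1, sc 0) ⟶ (sc 0, sc 0)) e

/-- The degenerate (identity) edge on a vertex `x ∈ X_{0,0}`. -/
def hdegen {X : BSSet} (x : X.obj (op ⦋0⦌, op ⦋0⦌)) : X.obj (op ⦋1⦌, op ⦋0⦌) :=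
  X.map ((((SimplexCategory.σ 0).op : sc 0 ⟶ sc 1), 𝟙 (sc 0)) :
    (sc 0, sc 0) ⟶ (sc 1, sc 0)) x

/-- Vertical face of `h ∈ X_{1,1}`: `vface 1 h` and `vface 0 h` are the two endpoints of the
path `h` in the space `X_1`. -/
def vface {X : BSSet} (i : Fin 2) (h : X.obj (op ⦋1⦌, op ⦋1⦌)) : X.obj (op ⦋1⦌, op ⦋0⦌) :=
  X.map ((𝟙 (sc 1), ((SimplexCategory.δ i).op : sc 1 ⟶ sc 0)) :
    (sc 1, sc 1) ⟶ (sc 1, sc 0)) h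

/-- Horizontal faces of a `2`-simplex `τ ∈ X_{2,0}`. -/
def hface2 {X : BSSet} (i : Fin 3) (τ : X.obj (op ⦋2⦌, op ⦋0⦌)) : X.obj (op ⦋1⦌, op ⦋0⦌) :=
  X.map ((((SimplexCategory.δ i).op : sc 2 ⟶ sc 1), 𝟙 (sc 0)) :
    (sc 2, sc 0) ⟶ (sc 1, sc 0)) τ

/-- Two edges are connected by a path in the space `X_1` . -/
def PathConn (X : BSSet) : X.obj (op ⦋1⦌, op ⦋0⦌) → X.obj (op ⦋1⦌, op ⦋0⦌) → Prop :=
  Relation.EqvGen (fun e e' => ∃ h : X.obj (op ⦋1⦌, op ⦋1⦌), vface 1 h = e ∧ vface 0 h = e')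

/-- A homotopy equivalence in a Segal space, in the sense of Rezk: an edge admitting a right
inverse and a left inverse up to homotopy. -/
def IsHomotopyEquivalenceEdge (X : BSSet) (e : X.obj (op ⦋1⦌, op ⦋0⦌)) : Prop :=
  (∃ (g : X.obj (op ⦋1⦌, op ⦋0⦌)) (τ : X.obj (op ⦋2⦌, op ⦋0⦌)),
    hface2 2 τ = g ∧ hface2 0 τ = e ∧ PathConn X (hface2 1 τ) (hdegen (hface 1 g))) ∧
  (∃ (g' : X.obj (op ⦋1⦌, op ⦋0⦌)) (τ' : X.obj (op ⦋2⦌, op ⦋0⦌)),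
    hface2 2 τ' = e ∧ hface2 0 τ' = g' ∧ PathConn X (hface2 1 τ') (hdegen (hface 1 e)))

/-- A cocartesian edge in the quasicategorical sense, for a map `π : C ⟶ D` of simplicial
sets: all left horns (for `n ≥ 2`) whose initial edge is `c`, together with a filler
downstairs, can be filled upstairs. -/
def QCocartesianEdge {C D : SSet.{0}} (π : C ⟶ D) (c : C.obj (op ⦋1⦌)) : Prop :=
  ∀ (n : ℕ) (hn : 2 ≤ n) (g : (Λ[n, 0] : SSet.{0}) ⟶ C) (d : Δ[n] ⟶ D),
    SSet.yonedaEquiv (edgeHorn n hn ≫ g) = c →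
    g ≫ π = Λ[n, 0].ι ≫ d →
    ∃ h : Δ[n] ⟶ C, Λ[n, 0].ι ≫ h = g ∧ h ≫ π = d

/-- A cocartesian fibration of quasicategories: an inner fibration such that every edge
downstairs with a lift of its source admits a cocartesian lift. -/
def IsQCocartesianFibration {C D : SSet.{0}} (π : C ⟶ D) : Prop :=
  IsInnerFibration π ∧
  ∀ (σ : D.obj (op ⦋1⦌)) (x : C.obj (op ⦋0⦌)),
    π.app (op ⦋0⦌) x = D.map (SimplexCategory.δ 1).op σ →
    ∃ c : C.obj (op ⦋1⦌), QCocartesianEdge π c ∧ π.app (op ⦋1⦌) c = σ ∧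
      C.map (SimplexCategory.δ 1).op c = x

/-- A cocartesian fibration between Segal spaces: a Reedy fibration such that every
morphism of `Y` with a lift of its source vertex admits an `f`-cocartesian lift. -/
noncomputable def IsCocartesianFibration {X Y : BSSet} (f : X ⟶ Y) : Prop :=
  IsReedyFibration f ∧
  ∀ (σ : Y.obj (op ⦋1⦌, op ⦋0⦌)) (x : X.obj (op ⦋0⦌, op ⦋0⦌)),
    f.app (op ⦋0⦌, op ⦋0⦌) x = hface 1 σ →
    ∃ e : X.obj (op ⦋1⦌, op ⦋0⦌), IsCocartesianEdge f e ∧ fApp f e = σ ∧ hface 1 e = x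

/-- The identity `m`-simplex of the standard simplex `Δ^m`. -/
def idSimplex (m : SimplexCategory) : (SSet.stdSimplex.{0}.obj m).obj (op m) :=
  (SSet.stdSimplex.objEquiv (n := m) (m := op m)).symm (𝟙 m)

/-- A marked simplicial set: a simplicial set together with a set of marked edges
containing all degenerate edges. -/
structure MSSet : Type 1 where
  carrier : SSet.{0}
  marked : Set (carrier.obj (op ⦋1⦌))
  degen_marked : ∀ x : carrier.obj (op ⦋0⦌),
    carrier.map ((SimplexCategory.σ 0).op : sc 0 ⟶ sc 1) x ∈ marked

instance : Category MSSet where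
  Hom A B := { g : A.carrier ⟶ B.carrier // ∀ a ∈ A.marked, g.app (op ⦋1⦌) a ∈ B.marked }
  id A := ⟨𝟙 A.carrier, fun _ ha => ha⟩
  comp f g := ⟨f.1 ≫ g.1, fun a ha => g.2 _ (f.2 a ha)⟩
  id_comp f := Subtype.ext (Category.id_comp _)
  comp_id f := Subtype.ext (Category.comp_id _)
  assoc f g h := Subtype.ext (Category.assoc _ _ _)

/-- A marked bisimplicial set: a bisimplicial set together with a set of marked edges in
`X_{1,0}` containing all degenerate edges. -/
structure MBSSet : Type 1 where
  carrier : BSSet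
  marked : Set (carrier.obj (op ⦋1⦌, op ⦋0⦌))
  degen_marked : ∀ x : carrier.obj (op ⦋0⦌, op ⦋0⦌), hdegen x ∈ marked

instance : Category MBSSet where
  Hom X Y := { g : X.carrier ⟶ Y.carrier //
    ∀ a ∈ X.marked, g.app (op ⦋1⦌, op ⦋0⦌) a ∈ Y.marked }
  id X := ⟨𝟙 X.carrier, fun _ ha => ha⟩
  comp f g := ⟨f.1 ≫ g.1, fun a ha => g.2 _ (f.2 a ha)⟩
  id_comp f := Subtype.ext (Category.id_comp _)
  comp_id f := Subtype.ext (Category.comp_id _)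
  assoc f g h := Subtype.ext (Category.assoc _ _ _)

/-- The marked box product `A □ B` of a marked simplicial set and a simplicial set:
an edge `(a, b) ∈ A₁ × B₀` is marked iff `a` is marked. -/
def mBoxObj (A : MSSet) (B : SSet.{0}) : MBSSet where
  carrier := boxObj A.carrier B
  marked := { z | z.1 ∈ A.marked }
  degen_marked x := A.degen_marked x.1

/-- The marked division `A \ X`: its `n`-simplices are the marked maps `A □ Δⁿ ⟶ X`. -/
def mUnder (A : MSSet) (X : MBSSet) : SSet.{0} where
  obj n := { σ : boxObj A.carrier (SSet.stdSimplex.obj n.unop) ⟶ X.carrier //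
      ∀ a ∈ A.marked, ∀ b, σ.app (op ⦋1⦌, op ⦋0⦌) (a, b) ∈ X.marked }
  map {n m} φ := TypeCat.ofHom fun σ =>
    ⟨boxMap (𝟙 A.carrier) (SSet.stdSimplex.map φ.unop) ≫ σ.1,
      fun a ha b => σ.2 a ha _⟩
  map_id n := by
    apply ConcreteCategory.hom_ext; intro σ
    apply Subtype.ext
    show boxMap (𝟙 A.carrier) (SSet.stdSimplex.map (𝟙 n.unop)) ≫ σ.1 = σ.1
    erw [CategoryTheory.Functor.map_id, boxMap_id, Category.id_comp]
  map_comp {n m k} φ ψ := by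
    apply ConcreteCategory.hom_ext; intro σ
    apply Subtype.ext
    show boxMap (𝟙 A.carrier) (SSet.stdSimplex.map (ψ.unop ≫ φ.unop)) ≫ σ.1 = _
    erw [Functor.map_comp, boxMapR_comp, Category.assoc]
    rfl

/-- Restriction of marked divisions along a map of marked simplicial sets. -/
def mUnderWhisker {A A' : MSSet} (u : A ⟶ A') (X : MBSSet) :
    mUnder A' X ⟶ mUnder A X where
  app n := TypeCat.ofHom fun σ => ⟨boxMap u.1 (𝟙 _) ≫ σ.1, fun a ha b => σ.2 _ (u.2 a ha) b⟩
  naturality n m φ := rfl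

/-- Pushforward of marked divisions along a map of marked bisimplicial sets. -/
def mUnderPush (A : MSSet) {X Y : MBSSet} (f : X ⟶ Y) :
    mUnder A X ⟶ mUnder A Y where
  app n := TypeCat.ofHom fun σ => ⟨σ.1 ≫ f.1, fun a ha b => f.2 _ (σ.2 a ha b)⟩
  naturality n m φ := rfl

lemma mUnderSq {A A' : MSSet} (u : A ⟶ A') {X Y : MBSSet} (f : X ⟶ Y) :
    mUnderWhisker u X ≫ mUnderPush A f = mUnderPush A' f ≫ mUnderWhisker u Y := rfl

/-- The gap map `⟨u \ f⟩` for marked divisions. -/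
noncomputable def mUnderGap {A A' : MSSet} (u : A ⟶ A') {X Y : MBSSet} (f : X ⟶ Y) :
    mUnder A' X ⟶ pullback (mUnderPush A f) (mUnderWhisker u Y) :=
  pullback.lift (mUnderWhisker u X) (mUnderPush A' f) (mUnderSq u f)

/-- The marked slice `X / B`: underlying simplicial set `X̊ / B`, an edge being marked iff
it sends each pair `(id₁, b)` to a marked edge of `X`. -/
def mOver (X : MBSSet) (B : SSet.{0}) : MSSet where
  carrier := overB X.carrier B
  marked := setOf (fun σ : (overB X.carrier B).obj (op ⦋1⦌) =>
      ∀ b : B.obj (op ⦋0⦌), NatTrans.app σ (op ⦋1⦌, op ⦋0⦌) (idSimplex ⦋1⦌, b) ∈ X.marked)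
  degen_marked x := by
    intro b
    have h := types_congr_hom
      (x.naturality ((((SimplexCategory.σ 0).op : sc 0 ⟶ sc 1), 𝟙 (sc 0)) :
        (sc 0, sc 0) ⟶ (sc 1, sc 0))) (idSimplex ⦋0⦌, b)
    simp only [types_comp_apply, boxObj_map, FunctorToTypes.map_id_apply] at h
    exact Set.mem_of_eq_of_mem h (X.degen_marked _)

/-- Pushforward of marked slices. -/
def mOverPush (B : SSet.{0}) {X Y : MBSSet} (f : X ⟶ Y) :
    mOver X B ⟶ mOver Y B :=
  ⟨overPush B f.1, by
    intro σ hσ b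
    exact f.2 _ (hσ b)⟩

/-- The functor `A □ - : SSet ⥤ MBSSet` for a marked simplicial set `A`. -/
def mBoxLFunctor (A : MSSet) : SSet.{0} ⥤ MBSSet where
  obj B := mBoxObj A B
  map v := ⟨boxMap (𝟙 A.carrier) v, fun z hz => hz⟩
  map_id B := Subtype.ext rfl
  map_comp v w := Subtype.ext rfl

/-- The functor `A \ - : MBSSet ⥤ SSet` for a marked simplicial set `A`. -/
def mUnderFunctor (A : MSSet) : MBSSet ⥤ SSet.{0} where
  obj X := mUnder A X
  map f := mUnderPush A f
  map_id X := by
    apply NatTrans.ext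
    funext n; apply ConcreteCategory.hom_ext; intro σ
    exact Subtype.ext (Category.comp_id _)
  map_comp f g := rfl

/-- The functor `- □ B : MSSet ⥤ MBSSet` for a simplicial set `B`. -/
def mBoxRFunctor (B : SSet.{0}) : MSSet ⥤ MBSSet where
  obj A := mBoxObj A B
  map u := ⟨boxMap u.1 (𝟙 B), fun z hz => u.2 z.1 hz⟩
  map_id A := Subtype.ext rfl
  map_comp u v := Subtype.ext rfl

/-- The functor `- / B : MBSSet ⥤ MSSet` for a simplicial set `B`. -/
def mOverFunctor (B : SSet.{0}) : MBSSet ⥤ MSSet where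
  obj X := mOver X B
  map f := mOverPush B f
  map_id X := by
    apply Subtype.ext
    apply NatTrans.ext
    funext n; apply ConcreteCategory.hom_ext; intro σ
    exact Category.comp_id (σ : boxObj _ B ⟶ X.carrier)
  map_comp f g := rfl

/-- The vertex `v` of a simplex. -/
def vertexOf {S : SSet.{0}} {n : SimplexCategoryᵒᵖ} (σ : S.obj n)
    (v : Fin (n.unop.len + 1)) : S.obj (op ⦋0⦌) :=
  S.map (Quiver.Hom.op
    (SimplexCategory.Hom.mk (OrderHom.const _ v) : (⦋0⦌ : SimplexCategory) ⟶ n.unop)) σ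

/-- A full inclusion of simplicial sets: a levelwise injection such that any simplex all of
whose vertices lie in the image itself lies in the image. -/
def IsFullInclusion {S T : SSet.{0}} (j : S ⟶ T) : Prop :=
  (∀ n, Function.Injective (j.app n)) ∧
  ∀ (n : SimplexCategoryᵒᵖ) (σ : T.obj n),
    (∀ v : Fin (n.unop.len + 1), vertexOf σ v ∈ Set.range (j.app (op ⦋0⦌))) →
    σ ∈ Set.range (j.app n)

/-- The inclusion `A \ X ⟶ Å \ X̊` of the marked division into the unmarked one. -/
def mUnderIncl (A : MSSet) (X : MBSSet) : mUnder A X ⟶ under A.carrier X.carrier where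
  app n := TypeCat.ofHom fun σ => σ.1
  naturality n m φ := rfl

/-- A marking on a marked bisimplicial set respects path components if for every edge
`e → e'` in the space `X₁`, `e` is marked iff `e'` is marked. -/
def MarkingRespectsPathComponents (X : MBSSet) : Prop :=
  ∀ h : X.carrier.obj (op ⦋1⦌, op ⦋1⦌), (vface 1 h ∈ X.marked ↔ vface 0 h ∈ X.marked)

/-- The `ℒ`-marking on a simplicial set `B` equipped with an edge `ι : Δ¹ ⟶ B`: the only
marked edges are the degenerate ones and (the image of) `ι`. -/
def mkL (B : SSet.{0}) (ι : Δ[1] ⟶ B) : MSSet where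
  carrier := B
  marked := Set.range (B.map ((SimplexCategory.σ 0).op : sc 0 ⟶ sc 1)) ∪
    {ι.app (op ⦋1⦌) (idSimplex ⦋1⦌)}
  degen_marked x := Or.inl ⟨x, rfl⟩

/-- A map between `ℒ`-marked simplicial sets preserving the distinguished edges. -/
def mkLHom {A B : SSet.{0}} (i : A ⟶ B) (ιA : Δ[1] ⟶ A) (ιB : Δ[1] ⟶ B)
    (h : ιA ≫ i = ιB) : mkL A ιA ⟶ mkL B ιB :=
  ⟨i, by
    rintro a (⟨x, rfl⟩ | ha)
    · exact Or.inl ⟨i.app _ x, (NatTrans.naturality_apply i _ x).symm⟩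
    · right
      replace ha : a = _ := ha
      show _ = _
      rw [ha, ← h]
      rfl⟩

lemma eConst_app {X : BSSet} (m : SimplexCategory) (e : X.obj (op ⦋1⦌, op ⦋0⦌))
    (b : (SSet.stdSimplex.{0}.obj m).obj (sc 0)) :
    (eConst m e).app (op ⦋1⦌, op ⦋0⦌) (idSimplex ⦋1⦌, b) = e := by
  show X.map ((SSet.stdSimplex.objEquiv (n := (⦋1⦌ : SimplexCategory)) (m := sc 1)
      (idSimplex ⦋1⦌)).op,
    (SSet.stdSimplex.objEquiv (n := (⦋0⦌ : SimplexCategory)) (m := sc 0)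
      ((SSet.stdSimplex.map (toZero m)).app (sc 0) b)).op) e = e
  rw [show SSet.stdSimplex.objEquiv (n := (⦋1⦌ : SimplexCategory)) (m := sc 1) (idSimplex ⦋1⦌)
      = 𝟙 (⦋1⦌ : SimplexCategory) from Equiv.apply_symm_apply _ _,
    toZero_unique (SSet.stdSimplex.objEquiv (n := (⦋0⦌ : SimplexCategory)) (m := sc 0)
      ((SSet.stdSimplex.map (toZero m)).app (sc 0) b)) (𝟙 (⦋0⦌ : SimplexCategory))]
  exact FunctorToTypes.map_id_apply X e

/-- The map from a fibered diagram space to the `ℒ`-marked division, well-defined when the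
fixed edge `e` is marked. -/
def fibToMarked {B : SSet.{0}} (ι : Δ[1] ⟶ B) (X : MBSSet)
    (e : X.carrier.obj (op ⦋1⦌, op ⦋0⦌)) (he : e ∈ X.marked) :
    fib ι X.carrier e ⟶ mUnder (mkL B ι) X where
  app n := TypeCat.ofHom fun σ => ⟨σ.1, by
    rintro a (⟨x, rfl⟩ | ha) b
    · have h := types_congr_hom
        (σ.1.naturality ((((SimplexCategory.σ 0).op : sc 0 ⟶ sc 1), 𝟙 (sc 0)) :
          (sc 0, sc 0) ⟶ (sc 1, sc 0))) (x, b)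
      simp only [types_comp_apply, boxObj_map, FunctorToTypes.map_id_apply] at h
      exact Set.mem_of_eq_of_mem h (X.degen_marked _)
    · replace ha : a = _ := ha
      subst ha
      have h := types_congr_hom (congrArg (fun τ => NatTrans.app τ (sc 1, sc 0)) σ.2)
        (idSimplex ⦋1⦌, b)
      rw [eConst_app] at h
      exact Set.mem_of_eq_of_mem h he⟩
  naturality n m φ := rfl

/-!
Applying Reedy fibrancy to the empty subcomplex `∅ ⊆ Å`, whose division `∅ \ X̊` is a point,
shows that `Å \ X̊` is a Kan complex. The marking condition on a simplex of `Å \ X̊` only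
involves its vertices, so `A \ X` is the full subcomplex spanned by the marked vertices. A full
subcomplex of a Kan complex is Kan: a horn of dimension at least two contains every vertex of the
simplex, so the filler stays in the subcomplex, and a one-dimensional horn is a single vertex,
filled by a degenerate edge.
-/

lemma exists_horn_one_filler {S : SSet.{0}} (i : Fin 2) (g : (Λ[1, i] : SSet.{0}) ⟶ S) :
    ∃ h : Δ[1] ⟶ S, Λ[1, i].ι ≫ h = g := by
  have hi : i.rev ≠ i := by fin_cases i <;> decide
  have retract : Λ[1, i].ι ≫ SSet.const (SSet.horn.face i i.rev hi) = 𝟙 _ := by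
    refine SSet.horn.hom_ext _ _ fun j hj => ?_
    obtain rfl : j = i.rev := by fin_cases i <;> fin_cases j <;> simp_all
    simp only [SSet.comp_const, SSet.const_app, SimplexCategory.const_eq_id, op_id,
      CategoryTheory.Functor.map_id]
    rfl
  exact ⟨SSet.const (SSet.horn.face i i.rev hi) ≫ g,
    by rw [← Category.assoc, retract, Category.id_comp]⟩

instance {B : SSet.{0}} (m : SimplexCategoryᵒᵖ) :
    IsEmpty (((⊥ : B.Subcomplex) : SSet.{0}).obj m) :=
  ⟨fun x => x.2⟩

instance {A B : SSet.{0}} [∀ m, IsEmpty (A.obj m)] (X : BSSet) : Unique (boxObj A B ⟶ X) where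
  default :=
    { app _ := TypeCat.ofHom fun x => isEmptyElim x.1
      naturality _ _ _ := by ext x; exact isEmptyElim x.1 }
  uniq _ := by ext _ x; exact isEmptyElim x.1

instance {A : SSet.{0}} [∀ m, IsEmpty (A.obj m)] (X : BSSet) (n : SimplexCategoryᵒᵖ) :
    Unique ((under A X).obj n) :=
  inferInstanceAs (Unique (boxObj _ _ ⟶ X))

lemma IsKanFibration.isKanComplex {S T : SSet.{0}} {f : S ⟶ T} (hf : IsKanFibration f)
    [∀ n, Subsingleton (T.obj n)] (t : T _⦋0⦌) : IsKanComplex S := by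
  intro n i g
  have := hf n i
  have sq : CommSq g Λ[n + 1, i].ι f (SSet.const t) := ⟨by ext; apply Subsingleton.elim⟩
  exact ⟨sq.lift, sq.fac_left⟩

lemma isKanComplex_under (B : SSet.{0}) {X : BSSet} (hX : IsReedyFibrant X) :
    IsKanComplex (under B X) :=
  (hX (⊥ : B.Subcomplex).ι inferInstance).isKanComplex default

lemma IsFullInclusion.mono {S T : SSet.{0}} {j : S ⟶ T} (hj : IsFullInclusion j) : Mono j :=
  have (n : SimplexCategoryᵒᵖ) : Mono (j.app n) := (mono_iff_injective _).2 (hj.1 n)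
  NatTrans.mono_of_mono_app j

lemma vertexOf_yonedaEquiv {T : SSet.{0}} {k : ℕ} (h : Δ[k] ⟶ T) (v : Fin (k + 1)) :
    vertexOf (SSet.yonedaEquiv h) v = h.app _ (SSet.stdSimplex.obj₀Equiv.symm v) := by
  rw [vertexOf, SSet.yonedaEquiv_naturality, SSet.yonedaEquiv_comp]
  rfl

lemma IsFullInclusion.exists_lift {S T : SSet.{0}} {j : S ⟶ T} (hj : IsFullInclusion j) {k : ℕ}
    (h : Δ[k] ⟶ T)
    (hv : ∀ v, h.app _ (SSet.stdSimplex.obj₀Equiv.symm v) ∈ Set.range (j.app (op ⦋0⦌))) :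
    ∃ h' : Δ[k] ⟶ S, h' ≫ j = h := by
  obtain ⟨τ, hτ⟩ := hj.2 _ (SSet.yonedaEquiv h) fun v => vertexOf_yonedaEquiv h v ▸ hv v
  exact ⟨SSet.yonedaEquiv.symm τ,
    by rw [SSet.yonedaEquiv_symm_comp, hτ, Equiv.symm_apply_apply]⟩

lemma IsFullInclusion.isKanComplex {S T : SSet.{0}} {j : S ⟶ T} (hj : IsFullInclusion j)
    (hT : IsKanComplex T) : IsKanComplex S := by
  rintro (_ | n) i g
  · exact exists_horn_one_filler i g
  obtain ⟨h, hh⟩ := hT (n + 1) i (g ≫ j)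
  obtain ⟨h', hh'⟩ := hj.exists_lift h fun v =>
    ⟨g.app _ (SSet.horn.const n i v _), (types_congr_hom (NatTrans.congr_app hh _) _).symm⟩
  have := hj.mono
  exact ⟨h', by rw [← cancel_mono j, Category.assoc, hh', hh]⟩

lemma mUnderIncl_isFullInclusion (A : MSSet) (X : MBSSet) : IsFullInclusion (mUnderIncl A X) := by
  refine ⟨fun n σ τ h => Subtype.ext h, fun n σ hσ => ⟨⟨σ, fun a ha b => ?_⟩, rfl⟩⟩
  obtain ⟨τ, hτ⟩ := hσ (SSet.stdSimplex.obj₀Equiv b)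
  have hb : σ.app (op ⦋1⦌, op ⦋0⦌) (a, b) =
      τ.1.app _ (a, SSet.stdSimplex.obj₀Equiv.symm 0) := by
    rw [show τ.1 = vertexOf σ _ from hτ]
    show _ = σ.app (op ⦋1⦌, op ⦋0⦌) (a, _)
    congr 2
    apply SSet.stdSimplex.obj₀Equiv.injective
    rfl
  exact hb ▸ τ.2 a ha _

/-- for any marked simplicial set `A` and Reedy fibrant marked bisimplicial set
`X`, the marked division `A \\ X` is a Kan complex and its inclusion into the unmarked
division `Å \\ X̊` is a full inclusion. -/
theorem marked_division_is_kan_and_fully_included (A : MSSet) (X : MBSSet)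
    (hX : IsReedyFibrant X.carrier) :
    IsKanComplex (mUnder A X) ∧ IsFullInclusion (mUnderIncl A X) := by
  have hfull := mUnderIncl_isFullInclusion A X
  exact ⟨hfull.isKanComplex (isKanComplex_under A.carrier hX), hfull⟩

end Paper
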